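/- (Lemma 3, ratio optimality of the Shewhart test.) Let L_1 be integrable and nonnegative, let η ≥ 1, and suppose α ∈ ℝ satisfies P(L_1 ≥ α) = 1/η and λ := E[(L_1 − α)⁺] > 0. Let τ_s := inf{t ≥ 1 : L_t ≥ α}. Then for every stopping time τ of the natural filtration with τ ≥ 1, P(τ < ∞) = 1, E[τ] = η, and L_τ integrable, one has E[L_τ]/E[τ] ≤ E[L_{τ_s}]/E[τ_s] = E[L_1·1{L_1 ≥ α}]. -/

import Mathlib

/-!
Context: (L_t)_{t≥1} i.i.d. real random variables on (Ω, F, P), natural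
filtration F_t = σ(L_1,…,L_t); a stopping time τ is ℕ≥1 ∪ {∞}-valued with
{τ ≤ t} ∈ F_t for all t; E denotes expectation under P; (x)⁺ := max(x,0).

STATEMENT 13 (Lemma 3, ratio optimality of the Shewhart test): let L_1 be
integrable and nonnegative, η ≥ 1, α with P(L_1 ≥ α) = 1/η and
λ := E[(L_1 − α)⁺] > 0, and τ_s := inf{t ≥ 1 : L_t ≥ α}.  Then every stopping
time τ with τ ≥ 1, P(τ < ∞) = 1, E[τ] = η and L_τ integrable satisfies
E[L_τ]/E[τ] ≤ E[L_{τ_s}]/E[τ_s] = E[L_1·1{L_1 ≥ α}].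
-/

open MeasureTheory ProbabilityTheory
open scoped ENNReal NNReal

/-- The natural filtration `F_t = σ(L_1, …, L_t)`. -/
def natFil {Ω : Type*} (L : ℕ → Ω → ℝ) (t : ℕ) : MeasurableSpace Ω :=
  ⨆ i ∈ Finset.Icc 1 t, MeasurableSpace.comap (L i) inferInstance

/-- First time `t ≥ 1` at which `hit t` occurs (`∞` if it never does). -/
noncomputable def firstHit {Ω : Type*} (hit : ℕ → Ω → Prop) (ω : Ω) : ℕ∞ :=
  sInf {t : ℕ∞ | ∃ n : ℕ, t = (n : ℕ∞) ∧ 1 ≤ n ∧ hit n ω}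

/-!
Write `λ = E(L₁ - α)⁺` and `p = P(L₁ ≥ α) = 1/η`. For a stopping time `τ`, the event
`{τ = n + 1}` lies in `{τ > n} ∈ F_n`, which is independent of `L_{n+1}`; summing over `n`
(Wald's argument) gives `E(L_τ - α)⁺ ≤ λ · Σₙ P(τ > n) = λ E τ`, hence
`E L_τ ≤ λ η + α` since `L_τ ≤ (L_τ - α)⁺ + α`.
For the Shewhart time, `{τ_s = n + 1} = {τ_s > n} ∩ {L_{n+1} ≥ α}` with
`P(τ_s > n) = (1 - p)ⁿ`, so `E τ_s = 1/p = η` and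
`E L_{τ_s} = η E[L₁; L₁ ≥ α] = η (λ + α p) = λ η + α`.
-/

open Set

lemma ENat.eq_natCast_add_one_iff {σ : ℕ∞} {n : ℕ} :
    σ = ((n + 1 : ℕ) : ℕ∞) ↔ (n : ℕ∞) < σ ∧ ¬ ((n + 1 : ℕ) : ℕ∞) < σ := by
  induction σ using ENat.recTopCoe with
  | top => exact iff_of_false (ENat.top_ne_natCast _) fun h => h.2 (ENat.natCast_lt_top _)
  | coe k => simp only [Nat.cast_inj, Nat.cast_lt]; omega

lemma ENat.toENNReal_eq_tsum (σ : ℕ∞) :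
    (σ : ℝ≥0∞) = ∑' n : ℕ, {k : ℕ∞ | (n : ℕ∞) < k}.indicator 1 σ := by
  induction σ using ENat.recTopCoe with
  | top => simp
  | coe k =>
    rw [tsum_eq_sum (s := Finset.range k) (fun n hn => by simp_all)]
    simp [indicator_apply, Finset.filter_true_of_mem fun x hx => Finset.mem_range.1 hx]

section FirstHit

variable {Ω : Type*} {hit : ℕ → Ω → Prop} {ω : Ω}

lemma natCast_lt_firstHit_iff {n : ℕ} :
    (n : ℕ∞) < firstHit hit ω ↔ ∀ i, 1 ≤ i → i ≤ n → ¬ hit i ω := by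
  refine ⟨fun h i hi hin hhit => ?_, fun h => ?_⟩
  · exact (h.trans_le (sInf_le ⟨i, rfl, hi, hhit⟩)).not_ge (mod_cast hin)
  · refine (ENat.add_one_le_iff (ENat.natCast_ne_top n)).1 (le_sInf ?_)
    rintro _ ⟨m, rfl, hm, hhit⟩
    exact_mod_cast Nat.succ_le_of_lt (lt_of_not_ge fun hle => h m hm hle hhit)

lemma zero_lt_firstHit : 0 < firstHit hit ω := by
  exact_mod_cast natCast_lt_firstHit_iff.2 fun i hi hi0 => absurd hi (by omega)

lemma natCast_add_one_lt_firstHit_iff {n : ℕ} :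
    ((n + 1 : ℕ) : ℕ∞) < firstHit hit ω ↔ (n : ℕ∞) < firstHit hit ω ∧ ¬ hit (n + 1) ω := by
  simp only [natCast_lt_firstHit_iff]
  refine ⟨fun h => ⟨fun i hi hin => h i hi (by omega), h _ (by omega) le_rfl⟩,
    fun ⟨h, hn⟩ i hi hin => ?_⟩
  rcases Nat.lt_or_ge i (n + 1) with hlt | hge
  · exact h i hi (by omega)
  · rwa [le_antisymm hin hge]

lemma firstHit_eq_natCast_add_one_iff {n : ℕ} :
    firstHit hit ω = ((n + 1 : ℕ) : ℕ∞) ↔ (n : ℕ∞) < firstHit hit ω ∧ hit (n + 1) ω := by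
  rw [ENat.eq_natCast_add_one_iff, natCast_add_one_lt_firstHit_iff]
  tauto

lemma measurableSet_natCast_lt_firstHit {ℱ : ℕ → MeasurableSpace Ω} (hℱ : Monotone ℱ)
    (hhit : ∀ n : ℕ, MeasurableSet[ℱ (n + 1)] {ω | hit (n + 1) ω}) (n : ℕ) :
    MeasurableSet[ℱ n] {ω | (n : ℕ∞) < firstHit hit ω} := by
  induction n with
  | zero => simp [zero_lt_firstHit]
  | succ n ih =>
    simp_rw [natCast_add_one_lt_firstHit_iff, ofPred_and]
    exact (hℱ n.le_succ _ ih).inter (hhit n).compl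

end FirstHit

section StoppedSums

lemma eqOn_setOf_eq_natCast {Ω E : Type*} {τ : Ω → ℕ∞} (f : ℕ → Ω → E) (n : ℕ) :
    EqOn (fun ω => f (τ ω).toNat ω) (f n) {ω | τ ω = n} :=
  fun ω (hω : τ ω = n) => by simp [hω]

lemma pairwise_disjoint_setOf_eq_natCast_add_one {Ω : Type*} {τ : Ω → ℕ∞} :
    Pairwise (Function.onFun Disjoint fun n : ℕ => {ω | τ ω = ((n + 1 : ℕ) : ℕ∞)}) :=
  fun i j hij => disjoint_left.2 fun ω (hi : τ ω = _) (hj : τ ω = _) => hij (by simpa [hi] using hj)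

variable {Ω E : Type*} [MeasurableSpace Ω] [NormedAddCommGroup E] {μ : Measure Ω} {τ : Ω → ℕ∞}

lemma ENat.measurable_of_measurableSet_lt
    (hτ : ∀ n : ℕ, MeasurableSet {ω | (n : ℕ∞) < τ ω}) : Measurable τ := by
  refine measurable_to_countable' fun k => ?_
  induction k using ENat.recTopCoe with
  | top =>
    convert MeasurableSet.iInter hτ using 1
    ext ω
    simp [ENat.eq_top_iff_forall_gt]
  | coe k =>
    cases k with
    | zero =>
      convert (hτ 0).compl using 1
      ext ω
      simp
    | succ k =>
      convert (hτ k).diff (hτ (k + 1)) using 1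
      ext ω
      exact ENat.eq_natCast_add_one_iff

lemma measurableSet_setOf_eq_natCast (hτ : Measurable τ) (n : ℕ) :
    MeasurableSet {ω | τ ω = n} :=
  hτ (measurableSet_singleton (n : ℕ∞))

lemma lintegral_enat_eq_tsum_measure_lt (hτ : Measurable τ) :
    ∫⁻ ω, (τ ω : ℝ≥0∞) ∂μ = ∑' n : ℕ, μ {ω | (n : ℕ∞) < τ ω} := by
  simp_rw [ENat.toENNReal_eq_tsum]
  refine (lintegral_tsum fun n => ?_).trans (tsum_congr fun n => ?_)
  · exact ((measurable_of_countable
      ({k : ℕ∞ | (n : ℕ∞) < k}.indicator (1 : ℕ∞ → ℝ≥0∞))).comp hτ).aemeasurable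
  · exact lintegral_indicator_one (s := τ ⁻¹' {k | (n : ℕ∞) < k}) (hτ .of_discrete)

lemma hasSum_measureReal_natCast_lt (hτ : Measurable τ)
    (hτint : ∫⁻ ω, (τ ω : ℝ≥0∞) ∂μ ≠ ⊤) :
    HasSum (fun n : ℕ => μ.real {ω | (n : ℕ∞) < τ ω}) (∫⁻ ω, (τ ω : ℝ≥0∞) ∂μ).toReal := by
  rw [lintegral_enat_eq_tsum_measure_lt hτ] at hτint ⊢
  rw [ENNReal.tsum_toReal_eq (ENNReal.ne_top_of_tsum_ne_top hτint)]
  exact ENNReal.hasSum_toReal hτint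

lemma restrict_iUnion_setOf_eq_natCast_add_one (hτ1 : ∀ ω, 1 ≤ τ ω)
    (hfin : ∀ᵐ ω ∂μ, τ ω ≠ ⊤) :
    μ.restrict (⋃ n : ℕ, {ω | τ ω = ((n + 1 : ℕ) : ℕ∞)}) = μ := by
  refine (Measure.restrict_congr_set (ae_eq_univ.2 (measure_mono_null ?_ (ae_iff.1 hfin)))).trans
    Measure.restrict_univ
  intro ω hω
  simp only [mem_compl_iff, mem_iUnion, mem_ofPred_eq, not_exists, not_not] at hω ⊢
  induction h : τ ω using ENat.recTopCoe with
  | top => rfl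
  | coe k =>
    obtain ⟨n, rfl⟩ : ∃ n, k = n + 1 := Nat.exists_eq_add_of_le' (by exact_mod_cast h ▸ hτ1 ω)
    exact absurd h (hω n)

variable (hτ : Measurable τ) (hτ1 : ∀ ω, 1 ≤ τ ω) (hfin : ∀ᵐ ω ∂μ, τ ω ≠ ⊤)
include hτ hτ1 hfin

lemma integrable_of_summable_setIntegral_norm {f : ℕ → Ω → E}
    (hf : ∀ n : ℕ, IntegrableOn (f (n + 1)) {ω | τ ω = ((n + 1 : ℕ) : ℕ∞)} μ)
    (hs : Summable fun n : ℕ => ∫ ω in {ω | τ ω = ((n + 1 : ℕ) : ℕ∞)}, ‖f (n + 1) ω‖ ∂μ) :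
    Integrable (fun ω => f (τ ω).toNat ω) μ := by
  have hmeas (n : ℕ) := measurableSet_setOf_eq_natCast hτ (n + 1)
  have h := integrableOn_iUnion_of_summable_integral_norm
    (fun n => (hf n).congr_fun (eqOn_setOf_eq_natCast f (n + 1)).symm (hmeas n))
    (hs.congr fun n => setIntegral_congr_fun (hmeas n)
      fun ω hω => congrArg norm (eqOn_setOf_eq_natCast f (n + 1) hω).symm)
  rwa [IntegrableOn, restrict_iUnion_setOf_eq_natCast_add_one hτ1 hfin] at h

lemma hasSum_setIntegral_setOf_eq_natCast_add_one [NormedSpace ℝ E] {f : ℕ → Ω → E}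
    (hf : Integrable (fun ω => f (τ ω).toNat ω) μ) :
    HasSum (fun n : ℕ => ∫ ω in {ω | τ ω = ((n + 1 : ℕ) : ℕ∞)}, f (n + 1) ω ∂μ)
      (∫ ω, f (τ ω).toNat ω ∂μ) := by
  have hmeas (n : ℕ) := measurableSet_setOf_eq_natCast hτ (n + 1)
  have h := hasSum_integral_iUnion hmeas pairwise_disjoint_setOf_eq_natCast_add_one
    hf.integrableOn
  rw [restrict_iUnion_setOf_eq_natCast_add_one hτ1 hfin] at h
  convert h using 2 with n
  exact setIntegral_congr_fun (hmeas n) (eqOn_setOf_eq_natCast f (n + 1)).symm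

end StoppedSums

lemma setIntegral_setOf_le_eq_integral_max_sub_add {Ω : Type*} [MeasurableSpace Ω]
    {μ : Measure Ω} [IsFiniteMeasure μ] {X : Ω → ℝ} (hX : Integrable X μ) (α : ℝ) :
    ∫ ω in {ω | α ≤ X ω}, X ω ∂μ = ∫ ω, max (X ω - α) 0 ∂μ + α * μ.real {ω | α ≤ X ω} := by
  have hA : NullMeasurableSet {ω | α ≤ X ω} μ :=
    nullMeasurableSet_le aemeasurable_const hX.aemeasurable
  have hmax : ∫ ω, max (X ω - α) 0 ∂μ = ∫ ω in {ω | α ≤ X ω}, (X ω - α) ∂μ := by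
    rw [← setIntegral_eq_integral_of_forall_compl_eq_zero (s := {ω | α ≤ X ω})
      fun ω (hω : ¬ α ≤ X ω) => max_eq_right (by linarith [not_le.1 hω])]
    exact setIntegral_congr_fun₀ hA fun ω (hω : α ≤ X ω) => max_eq_left (by linarith)
  rw [hmax, integral_sub hX.integrableOn (integrableOn_const (measure_ne_top _ _)),
    setIntegral_const, smul_eq_mul]
  ring

lemma integral_le_integral_max_sub_add {Ω : Type*} [MeasurableSpace Ω] {μ : Measure Ω}
    [IsProbabilityMeasure μ] {X : Ω → ℝ} (hX : Integrable X μ) (α : ℝ) :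
    ∫ ω, X ω ∂μ ≤ ∫ ω, max (X ω - α) 0 ∂μ + α := by
  have hmax : Integrable (fun ω => max (X ω - α) 0) μ := (hX.sub (integrable_const α)).pos_part
  calc ∫ ω, X ω ∂μ
      ≤ ∫ ω, (max (X ω - α) 0 + α) ∂μ :=
        integral_mono hX (hmax.add (integrable_const α)) fun ω => by
          linarith [le_max_left (X ω - α) 0]
    _ = ∫ ω, max (X ω - α) 0 ∂μ + α := by
        rw [integral_add hmax (integrable_const α), integral_const, probReal_univ, one_smul]

section NatFil

lemma natFil_mono {Ω : Type*} {L : ℕ → Ω → ℝ} : Monotone (natFil L) :=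
  fun _ _ hst => biSup_mono fun _ hi => Finset.Icc_subset_Icc_right hst hi

lemma comap_le_natFil {Ω : Type*} {L : ℕ → Ω → ℝ} {i t : ℕ} (hi : 1 ≤ i) (hit : i ≤ t) :
    MeasurableSpace.comap (L i) inferInstance ≤ natFil L t :=
  le_iSup₂ (f := fun i (_ : i ∈ Finset.Icc 1 t) => MeasurableSpace.comap (L i) inferInstance)
    i (Finset.mem_Icc.2 ⟨hi, hit⟩)

variable {Ω : Type*} [mΩ : MeasurableSpace Ω] {P : Measure Ω} {L : ℕ → Ω → ℝ}
  (hmeas : ∀ n, 1 ≤ n → Measurable (L n))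
include hmeas

lemma natFil_le (t : ℕ) : natFil L t ≤ mΩ :=
  iSup₂_le fun i hi => (hmeas i (Finset.mem_Icc.1 hi).1).comap_le

lemma identDistrib_one (hident : ∀ n, 1 ≤ n → P.map (L n) = P.map (L 1)) {n : ℕ}
    (hn : 1 ≤ n) : IdentDistrib (L n) (L 1) P P :=
  ⟨(hmeas n hn).aemeasurable, (hmeas 1 le_rfl).aemeasurable, hident n hn⟩

variable (hindep : iIndepFun (fun i : {n : ℕ // 1 ≤ n} => L i) P)
include hindep

lemma indep_natFil_comap {M n : ℕ} (hn : 1 ≤ n) (hMn : M < n) :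
    Indep (natFil L M) (MeasurableSpace.comap (L n) inferInstance) P := by
  let m (i : {n : ℕ // 1 ≤ n}) : MeasurableSpace Ω := MeasurableSpace.comap (L i) inferInstance
  let past : Set {n : ℕ // 1 ≤ n} := {i | (i : ℕ) ≤ M}
  have h := indep_biSup_compl (s := m) (fun i => (hmeas i i.2).comap_le) hindep.iIndep past
  refine indep_of_indep_of_le_left (indep_of_indep_of_le_right h ?_) ?_
  · exact le_biSup m (show ⟨n, hn⟩ ∈ pastᶜ from hMn.not_ge)
  · exact iSup₂_le fun i hi =>
      le_biSup m (show ⟨i, (Finset.mem_Icc.1 hi).1⟩ ∈ past from (Finset.mem_Icc.1 hi).2)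

variable (hident : ∀ n, 1 ≤ n → P.map (L n) = P.map (L 1))
include hident

lemma measure_inter_preimage_eq_mul {M n : ℕ} (hn : 1 ≤ n) (hMn : M < n) {B : Set Ω}
    (hB : MeasurableSet[natFil L M] B) {s : Set ℝ} (hs : MeasurableSet s) :
    P (B ∩ L n ⁻¹' s) = P B * P (L 1 ⁻¹' s) := by
  rw [(Indep_iff _ _ _).1 (indep_natFil_comap hmeas hindep hn hMn) B _ hB ⟨s, hs, rfl⟩,
    (identDistrib_one hmeas hident hn).measure_mem_eq hs]

lemma setIntegral_comp_eq_mul [IsProbabilityMeasure P] {M n : ℕ} (hn : 1 ≤ n) (hMn : M < n)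
    {B : Set Ω} (hB : MeasurableSet[natFil L M] B) {φ : ℝ → ℝ} (hφ : Measurable φ) :
    ∫ ω in B, φ (L n ω) ∂P = P.real B * ∫ ω, φ (L 1 ω) ∂P := by
  rw [(indep_natFil_comap hmeas hindep hn hMn).setIntegral_eq_mul (natFil_le hmeas M)
    (hmeas n hn).aemeasurable hB hφ.aestronglyMeasurable]
  congr 1
  exact ((identDistrib_one hmeas hident hn).comp hφ).integral_eq

end NatFil

section Wald

variable {Ω : Type*} [MeasurableSpace Ω] {P : Measure Ω} [IsProbabilityMeasure P]
  {L : ℕ → Ω → ℝ} (hmeas : ∀ n, 1 ≤ n → Measurable (L n))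
  (hindep : iIndepFun (fun i : {n : ℕ // 1 ≤ n} => L i) P)
  (hident : ∀ n, 1 ≤ n → P.map (L n) = P.map (L 1))
include hmeas hindep hident

lemma integral_comp_stopped_le {τ : Ω → ℕ∞} (hτ1 : ∀ ω, 1 ≤ τ ω)
    (hτ : ∀ n : ℕ, MeasurableSet[natFil L n] {ω | (n : ℕ∞) < τ ω}) (hfin : ∀ᵐ ω ∂P, τ ω ≠ ⊤)
    (hτint : ∫⁻ ω, (τ ω : ℝ≥0∞) ∂P ≠ ⊤) {g : ℝ → ℝ} (hg : Measurable g) (hg0 : 0 ≤ g)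
    (hgL : Integrable (fun ω => g (L 1 ω)) P)
    (hgτ : Integrable (fun ω => g (L (τ ω).toNat ω)) P) :
    ∫ ω, g (L (τ ω).toNat ω) ∂P ≤ (∫⁻ ω, (τ ω : ℝ≥0∞) ∂P).toReal * ∫ ω, g (L 1 ω) ∂P := by
  have hτm : Measurable τ :=
    ENat.measurable_of_measurableSet_lt fun n => natFil_le hmeas n _ (hτ n)
  refine hasSum_le (fun n => ?_)
    (hasSum_setIntegral_setOf_eq_natCast_add_one hτm hτ1 hfin (f := fun n ω => g (L n ω)) hgτ)
    ((hasSum_measureReal_natCast_lt hτm hτint).mul_right _)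
  have hsub : {ω | τ ω = ((n + 1 : ℕ) : ℕ∞)} ⊆ {ω | (n : ℕ∞) < τ ω} :=
    fun ω (h : τ ω = _) => show (n : ℕ∞) < τ ω by rw [h]; exact_mod_cast n.lt_succ_self
  have hgn : Integrable (fun ω => g (L (n + 1) ω)) P :=
    ((identDistrib_one hmeas hident n.succ_pos).comp hg).integrable_iff.2 hgL
  calc ∫ ω in {ω | τ ω = ((n + 1 : ℕ) : ℕ∞)}, g (L (n + 1) ω) ∂P
      ≤ ∫ ω in {ω | (n : ℕ∞) < τ ω}, g (L (n + 1) ω) ∂P :=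
        setIntegral_mono_set hgn.integrableOn (ae_of_all _ fun ω => hg0 _) hsub.eventuallyLE
    _ = P.real {ω | (n : ℕ∞) < τ ω} * ∫ ω, g (L 1 ω) ∂P :=
        setIntegral_comp_eq_mul hmeas hindep hident n.succ_pos n.lt_succ_self (hτ n) hg

lemma integral_stopped_le_mul_add (hint : Integrable (L 1) P) {τ : Ω → ℕ∞}
    (hτ1 : ∀ ω, 1 ≤ τ ω) (hst : ∀ t : ℕ, MeasurableSet[natFil L t] {ω | τ ω ≤ (t : ℕ∞)})
    (hfin : P {ω | τ ω ≠ ⊤} = 1) (hτint : ∫⁻ ω, (τ ω : ℝ≥0∞) ∂P ≠ ⊤)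
    (hLτ : Integrable (fun ω => L (τ ω).toNat ω) P) (α : ℝ) :
    ∫ ω, L (τ ω).toNat ω ∂P
      ≤ (∫⁻ ω, (τ ω : ℝ≥0∞) ∂P).toReal * ∫ ω, max (L 1 ω - α) 0 ∂P + α := by
  have hlt (n : ℕ) : MeasurableSet[natFil L n] {ω | (n : ℕ∞) < τ ω} := by
    simpa only [compl_ofPred, not_le] using (hst n).compl
  have hτm : Measurable τ :=
    ENat.measurable_of_measurableSet_lt fun n => natFil_le hmeas n _ (hlt n)
  have hwald := integral_comp_stopped_le hmeas hindep hident hτ1 hlt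
    ((mem_ae_iff_prob_eq_one (s := {ω | τ ω ≠ ⊤}) (hτm (measurableSet_singleton ⊤).compl)).2 hfin)
    hτint (g := fun x => max (x - α) 0) (by fun_prop) (fun x => le_max_right _ _)
    (hint.sub (integrable_const α)).pos_part (hLτ.sub (integrable_const α)).pos_part
  linarith [integral_le_integral_max_sub_add hLτ α]

end Wald

section Shewhart

variable {Ω : Type*}

noncomputable def shewhartTime (L : ℕ → Ω → ℝ) (α : ℝ) : Ω → ℕ∞ :=
  firstHit fun n ω => α ≤ L n ω

variable {L : ℕ → Ω → ℝ} {α : ℝ}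

lemma one_le_shewhartTime (ω : Ω) : 1 ≤ shewhartTime L α ω :=
  Order.one_le_iff_pos.2 zero_lt_firstHit

lemma measurableSet_natFil_natCast_lt_shewhartTime (n : ℕ) :
    MeasurableSet[natFil L n] {ω | (n : ℕ∞) < shewhartTime L α ω} :=
  measurableSet_natCast_lt_firstHit natFil_mono
    (fun k => comap_le_natFil k.succ_pos le_rfl _ ⟨Ici α, measurableSet_Ici, rfl⟩) n

variable [MeasurableSpace Ω] {P : Measure Ω} [IsProbabilityMeasure P]
  (hmeas : ∀ n, 1 ≤ n → Measurable (L n))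
include hmeas

lemma measurable_shewhartTime : Measurable (shewhartTime L α) :=
  ENat.measurable_of_measurableSet_lt fun n =>
    natFil_le hmeas n _ (measurableSet_natFil_natCast_lt_shewhartTime n)

variable (hindep : iIndepFun (fun i : {n : ℕ // 1 ≤ n} => L i) P)
  (hident : ∀ n, 1 ≤ n → P.map (L n) = P.map (L 1))
include hindep hident

lemma measure_natCast_lt_shewhartTime (n : ℕ) :
    P {ω | (n : ℕ∞) < shewhartTime L α ω} = (1 - P {ω | α ≤ L 1 ω}) ^ n := by
  induction n with
  | zero => simp [shewhartTime, zero_lt_firstHit]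
  | succ n ih =>
    have hset : {ω | ((n + 1 : ℕ) : ℕ∞) < shewhartTime L α ω}
        = {ω | (n : ℕ∞) < shewhartTime L α ω} ∩ L (n + 1) ⁻¹' (Ici α)ᶜ := by
      ext ω
      exact natCast_add_one_lt_firstHit_iff
    rw [hset, measure_inter_preimage_eq_mul hmeas hindep hident n.succ_pos n.lt_succ_self
      (measurableSet_natFil_natCast_lt_shewhartTime n) measurableSet_Ici.compl, ih,
      preimage_compl, prob_compl_eq_one_sub (hmeas 1 le_rfl measurableSet_Ici), pow_succ]
    rfl

lemma lintegral_shewhartTime :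
    ∫⁻ ω, (shewhartTime L α ω : ℝ≥0∞) ∂P = (P {ω | α ≤ L 1 ω})⁻¹ := by
  rw [lintegral_enat_eq_tsum_measure_lt (measurable_shewhartTime hmeas),
    tsum_congr (measure_natCast_lt_shewhartTime hmeas hindep hident), ENNReal.tsum_geometric,
    ENNReal.sub_sub_cancel ENNReal.one_ne_top prob_le_one]

lemma setIntegral_shewhartTime_eq {φ : ℝ → ℝ} (hφ : Measurable φ) (n : ℕ) :
    ∫ ω in {ω | shewhartTime L α ω = ((n + 1 : ℕ) : ℕ∞)}, φ (L (n + 1) ω) ∂P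
      = P.real {ω | (n : ℕ∞) < shewhartTime L α ω} * ∫ ω in {ω | α ≤ L 1 ω}, φ (L 1 ω) ∂P := by
  have hset : {ω | shewhartTime L α ω = ((n + 1 : ℕ) : ℕ∞)}
      = {ω | (n : ℕ∞) < shewhartTime L α ω} ∩ {ω | α ≤ L (n + 1) ω} := by
    ext ω
    exact firstHit_eq_natCast_add_one_iff
  have hA (k : ℕ) (hk : 1 ≤ k) : MeasurableSet {ω | α ≤ L k ω} := hmeas k hk measurableSet_Ici
  have hind (k : ℕ) (ω : Ω) :
      {ω | α ≤ L k ω}.indicator (fun ω => φ (L k ω)) ω = (Ici α).indicator φ (L k ω) :=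
    indicator_comp_right (L k)
  rw [hset, ← setIntegral_indicator (hA _ n.succ_pos), ← integral_indicator (hA 1 le_rfl)]
  simp_rw [hind]
  exact setIntegral_comp_eq_mul hmeas hindep hident n.succ_pos n.lt_succ_self
    (measurableSet_natFil_natCast_lt_shewhartTime n) (hφ.indicator measurableSet_Ici)

variable (hp : P {ω | α ≤ L 1 ω} ≠ 0)
include hp

lemma lintegral_shewhartTime_ne_top : ∫⁻ ω, (shewhartTime L α ω : ℝ≥0∞) ∂P ≠ ⊤ := by
  rw [lintegral_shewhartTime hmeas hindep hident]
  exact ENNReal.inv_ne_top.2 hp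

lemma ae_shewhartTime_ne_top : ∀ᵐ ω ∂P, shewhartTime L α ω ≠ ⊤ := by
  filter_upwards [ae_lt_top ((measurable_of_countable _).comp (measurable_shewhartTime hmeas))
    (lintegral_shewhartTime_ne_top hmeas hindep hident hp)] with ω hω
  simpa [lt_top_iff_ne_top] using hω

lemma integrable_shewhartTime (hint : Integrable (L 1) P) :
    Integrable (fun ω => L (shewhartTime L α ω).toNat ω) P :=
  integrable_of_summable_setIntegral_norm (measurable_shewhartTime hmeas) one_le_shewhartTime
    (ae_shewhartTime_ne_top hmeas hindep hident hp)
    (fun n => ((identDistrib_one hmeas hident n.succ_pos).integrable_iff.2 hint).integrableOn)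
    (((hasSum_measureReal_natCast_lt (measurable_shewhartTime hmeas)
      (lintegral_shewhartTime_ne_top hmeas hindep hident hp)).mul_right _).summable.congr
        fun n => (setIntegral_shewhartTime_eq hmeas hindep hident measurable_norm n).symm)

lemma integral_shewhartTime (hint : Integrable (L 1) P) :
    ∫ ω, L (shewhartTime L α ω).toNat ω ∂P
      = (∫⁻ ω, (shewhartTime L α ω : ℝ≥0∞) ∂P).toReal * ∫ ω in {ω | α ≤ L 1 ω}, L 1 ω ∂P := by
  have h := (hasSum_measureReal_natCast_lt (measurable_shewhartTime hmeas)
    (lintegral_shewhartTime_ne_top hmeas hindep hident hp)).mul_right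
      (∫ ω in {ω | α ≤ L 1 ω}, L 1 ω ∂P)
  simp only [← setIntegral_shewhartTime_eq hmeas hindep hident measurable_id'] at h
  exact (hasSum_setIntegral_setOf_eq_natCast_add_one (measurable_shewhartTime hmeas)
    one_le_shewhartTime (ae_shewhartTime_ne_top hmeas hindep hident hp)
    (integrable_shewhartTime hmeas hindep hident hp hint)).unique h

end Shewhart

theorem stmt_13_general
    {Ω : Type*} [MeasurableSpace Ω] (P : Measure Ω) [IsProbabilityMeasure P]
    (L : ℕ → Ω → ℝ)
    (hmeas : ∀ n, 1 ≤ n → Measurable (L n))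
    (hindep :
      iIndepFun
        (fun i : {n : ℕ // 1 ≤ n} => L i) P)
    (hident : ∀ n, 1 ≤ n → P.map (L n) = P.map (L 1))
    (hint : Integrable (L 1) P)
    (η : ℝ≥0∞)
    (α : ℝ) (hα : P {ω | α ≤ L 1 ω} = 1 / η)
    (hlam : 0 < ∫ ω, max (L 1 ω - α) 0 ∂P) :
    (∀ τ : Ω → ℕ∞, (∀ ω, 1 ≤ τ ω) →
        (∀ t : ℕ, MeasurableSet[natFil L t] {ω | τ ω ≤ (t : ℕ∞)}) →
        P {ω | τ ω ≠ ⊤} = 1 →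
        (∫⁻ ω, (τ ω : ℝ≥0∞) ∂P = η) →
        Integrable (fun ω => L (τ ω).toNat ω) P →
        (∫ ω, L (τ ω).toNat ω ∂P) / (∫⁻ ω, (τ ω : ℝ≥0∞) ∂P).toReal
          ≤ (∫ ω, L (firstHit (fun n ω' => α ≤ L n ω') ω).toNat ω ∂P)
              / (∫⁻ ω, (firstHit (fun n ω' => α ≤ L n ω') ω : ℝ≥0∞) ∂P).toReal) ∧
      (∫ ω, L (firstHit (fun n ω' => α ≤ L n ω') ω).toNat ω ∂P)
          / (∫⁻ ω, (firstHit (fun n ω' => α ≤ L n ω') ω : ℝ≥0∞) ∂P).toReal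
        = ∫ ω in {ω | α ≤ L 1 ω}, L 1 ω ∂P := by
  rw [show firstHit (fun n ω' => α ≤ L n ω') = shewhartTime L α from rfl]
  have hm := setIntegral_setOf_le_eq_integral_max_sub_add hint α
  have hp : P {ω | α ≤ L 1 ω} ≠ 0 := fun h0 => by
    rw [Measure.restrict_eq_zero.2 h0, integral_zero_measure, measureReal_def, h0,
      ENNReal.toReal_zero] at hm
    linarith
  have hη : η = (P {ω | α ≤ L 1 ω})⁻¹ := by rw [hα, one_div, inv_inv]
  have hηtop : η ≠ ⊤ := by rwa [hη, ENNReal.inv_ne_top]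
  have hηpos : 0 < η.toReal := ENNReal.toReal_pos (by simp [hη, measure_ne_top]) hηtop
  have hpη : P.real {ω | α ≤ L 1 ω} * η.toReal = 1 := by
    rw [measureReal_def, hη, ENNReal.toReal_inv,
      mul_inv_cancel₀ (ENNReal.toReal_pos hp (measure_ne_top _ _)).ne']
  have hratio : (∫ ω, L (shewhartTime L α ω).toNat ω ∂P)
      / (∫⁻ ω, (shewhartTime L α ω : ℝ≥0∞) ∂P).toReal = ∫ ω in {ω | α ≤ L 1 ω}, L 1 ω ∂P := by
    rw [integral_shewhartTime hmeas hindep hident hp hint,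
      lintegral_shewhartTime hmeas hindep hident, ← hη, mul_div_cancel_left₀ _ hηpos.ne']
  refine ⟨fun τ hτ1 hst hfin hτη hLτ => ?_, hratio⟩
  have h := integral_stopped_le_mul_add hmeas hindep hident hint hτ1 hst hfin
    (hτη ▸ hηtop) hLτ α
  rw [hratio, hτη, div_le_iff₀ hηpos, hm]
  rw [hτη] at h
  linear_combination h - α * hpη

theorem stmt_13
    {Ω : Type*} [MeasurableSpace Ω] (P : Measure Ω) [IsProbabilityMeasure P]
    (L : ℕ → Ω → ℝ)
    (hmeas : ∀ n, 1 ≤ n → Measurable (L n))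
    (hindep :
      iIndepFun
        (fun i : {n : ℕ // 1 ≤ n} => L i) P)
    (hident : ∀ n, 1 ≤ n → P.map (L n) = P.map (L 1))
    (hint : Integrable (L 1) P)
    (hnonneg : 0 ≤ᵐ[P] L 1)
    (η : ℝ≥0∞) (hη : 1 ≤ η)
    (α : ℝ) (hα : P {ω | α ≤ L 1 ω} = 1 / η)
    (hlam : 0 < ∫ ω, max (L 1 ω - α) 0 ∂P) :
    (∀ τ : Ω → ℕ∞, (∀ ω, 1 ≤ τ ω) →
        (∀ t : ℕ, MeasurableSet[natFil L t] {ω | τ ω ≤ (t : ℕ∞)}) →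
        P {ω | τ ω ≠ ⊤} = 1 →
        (∫⁻ ω, (τ ω : ℝ≥0∞) ∂P = η) →
        Integrable (fun ω => L (τ ω).toNat ω) P →
        (∫ ω, L (τ ω).toNat ω ∂P) / (∫⁻ ω, (τ ω : ℝ≥0∞) ∂P).toReal
          ≤ (∫ ω, L (firstHit (fun n ω' => α ≤ L n ω') ω).toNat ω ∂P)
              / (∫⁻ ω, (firstHit (fun n ω' => α ≤ L n ω') ω : ℝ≥0∞) ∂P).toReal) ∧
      (∫ ω, L (firstHit (fun n ω' => α ≤ L n ω') ω).toNat ω ∂P)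
          / (∫⁻ ω, (firstHit (fun n ω' => α ≤ L n ω') ω : ℝ≥0∞) ∂P).toReal
        = ∫ ω in {ω | α ≤ L 1 ω}, L 1 ω ∂P :=
  stmt_13_general P L hmeas hindep hident hint η α hα hlam
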